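/- Let k be a field of characteristic 0 and let N ∈ Mₙ(k) be a nilpotent matrix. Then there exists a diagonalizable matrix H ∈ Mₙ(k) with integer eigenvalues such that H N − N H = 2 N. -/

import Mathlib

open Module Submodule

universe u

lemma jm_finrank_iInf_ker {k : Type*} {V : Type u} [Field k] [AddCommGroup V] [Module k V]
    [FiniteDimensional k V] {ι : Type*} (ψ : ι → (V →ₗ[k] k)) (s : Finset ι) :
    finrank k V ≤ finrank k ↥(⨅ i ∈ s, LinearMap.ker (ψ i)) + s.card := by
  classical
  induction s using Finset.induction_on with
  | empty =>
    rw [show (⨅ i ∈ (∅ : Finset ι), LinearMap.ker (ψ i)) = ⊤ by simp]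
    simp [finrank_top]
  | @insert a s ha ih =>
    rw [Finset.iInf_insert]
    have h1 := Submodule.finrank_sup_add_finrank_inf_eq (LinearMap.ker (ψ a))
      (⨅ i ∈ s, LinearMap.ker (ψ i))
    have h2 : finrank k ↥(LinearMap.ker (ψ a) ⊔ ⨅ i ∈ s, LinearMap.ker (ψ i)) ≤ finrank k V :=
      Submodule.finrank_le _
    have h3 := LinearMap.finrank_range_add_finrank_ker (ψ a)
    have h4 : finrank k ↥(LinearMap.range (ψ a)) ≤ 1 := by
      simpa using Submodule.finrank_le (LinearMap.range (ψ a))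
    rw [Finset.card_insert_of_notMem ha]
    omega

lemma jm_key {k : Type*} [Field k] :
    ∀ (r : ℕ) (V : Type u) [AddCommGroup V] [Module k V] [FiniteDimensional k V],
      finrank k V ≤ r → ∀ f : V →ₗ[k] V, IsNilpotent f →
      ∃ (ι : Type) (_ : Fintype ι) (b : Basis ι k V) (d : ι → ℤ),
        ∀ i j, b.repr (f (b j)) i ≠ 0 → d i = d j + 2 := by
  intro r
  induction r with
  | zero =>
    intro V _ _ _ hr f hf
    have h0 : finrank k V = 0 := Nat.le_zero.mp hr
    haveI : Subsingleton V := by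
      rw [finrank_zero_iff_forall_zero] at h0
      exact ⟨fun a b => by rw [h0 a, h0 b]⟩
    exact ⟨Fin 0, inferInstance, Basis.empty V, fun _ => 0, fun i => i.elim0⟩
  | succ r ih =>
    intro V _ _ _ hr f hf
    by_cases hV : Subsingleton V
    · exact ⟨Fin 0, inferInstance, Basis.empty V, fun _ => 0, fun i => i.elim0⟩
    haveI : Nontrivial V := not_subsingleton_iff_nontrivial.mp hV
    haveI : Nontrivial (V →ₗ[k] V) := by
      obtain ⟨x, hx⟩ := exists_ne (0 : V)
      exact ⟨1, 0, fun h => hx (by simpa using LinearMap.ext_iff.mp h x)⟩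
    set m := nilpotencyClass f with hm
    have hm0 : 0 < m := pos_nilpotencyClass_iff.mpr hf
    have hfm : f ^ m = 0 := pow_nilpotencyClass hf
    have hfm1 : f ^ (m - 1) ≠ 0 := pow_pred_nilpotencyClass hf
    obtain ⟨v, hv⟩ : ∃ v, (f ^ (m - 1)) v ≠ 0 := by
      by_contra h; push_neg at h; exact hfm1 (LinearMap.ext fun x => h x)
    have hze : ∀ e, m ≤ e → (f ^ e) v = 0 := by
      intro e he
      rw [← Nat.sub_add_cancel he, pow_add, Module.End.mul_apply, hfm, LinearMap.zero_apply,
        map_zero]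
    set c : Fin m → V := fun i => (f ^ (i : ℕ)) v with hc
    obtain ⟨i0, hi0⟩ : ∃ i0, (Module.finBasis k V).repr ((f ^ (m - 1)) v) i0 ≠ 0 := by
      by_contra h
      push_neg at h
      exact hv ((Module.finBasis k V).repr.map_eq_zero_iff.mp (Finsupp.ext h))
    set φ : V →ₗ[k] k := (Module.finBasis k V).coord i0 with hφdef
    have hφ : φ ((f ^ (m - 1)) v) ≠ 0 := by simpa [hφdef, Basis.coord_apply] using hi0
    -- key triangularity computation
    have hkey : ∀ a : Fin m → k,
        (∀ t : Fin m, φ ((f ^ (t : ℕ)) (∑ l, a l • c l)) = 0) → ∀ i, a i = 0 := by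
      intro a ha
      suffices H : ∀ s : ℕ, ∀ i : Fin m, (i : ℕ) = s → a i = 0 by
        intro i; exact H i i rfl
      intro s
      induction s using Nat.strong_induction_on with
      | _ s ihs =>
        intro i his
        have him : (i : ℕ) < m := i.isLt
        have hs1 : s ≤ m - 1 := by omega
        have h0 := ha ⟨m - 1 - s, by omega⟩
        have hterm : ∀ l : Fin m,
            φ ((f ^ (m - 1 - s)) (a l • c l)) = a l * φ ((f ^ (m - 1 - s + (l : ℕ))) v) := by
          intro l
          rw [map_smul, map_smul, smul_eq_mul]
          congr 2
          show (f ^ (m - 1 - s)) ((f ^ (l : ℕ)) v) = _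
          rw [← Module.End.mul_apply, ← pow_add]
        rw [map_sum, map_sum, Finset.sum_congr rfl (fun l _ => hterm l),
          Finset.sum_eq_single i] at h0
        · rw [show m - 1 - s + (i : ℕ) = m - 1 by omega] at h0
          exact (mul_eq_zero.mp h0).resolve_right hφ
        · intro l _ hl
          by_cases hls : (l : ℕ) < s
          · rw [ihs _ hls l rfl, zero_mul]
          · have hgt : s < (l : ℕ) := by
              rcases Nat.lt_or_ge s (l : ℕ) with h | h
              · exact h
              · exact absurd (Fin.ext (show (l : ℕ) = (i : ℕ) by omega)) hl
            rw [hze _ (by omega), map_zero, mul_zero]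
        · intro h; exact absurd (Finset.mem_univ i) h
    -- linear independence of the cyclic family
    have hli : LinearIndependent k c := by
      rw [Fintype.linearIndependent_iff]
      intro g hg
      exact hkey g fun t => by rw [hg, map_zero, map_zero]
    set W : Submodule k V := span k (Set.range c) with hWdef
    have hfc : ∀ i : Fin m, f (c i) = (f ^ ((i : ℕ) + 1)) v := by
      intro i
      show f ((f ^ (i : ℕ)) v) = _
      rw [pow_succ', Module.End.mul_apply]
    have hWinv : ∀ x ∈ W, f x ∈ W := by
      intro x hx
      induction hx using Submodule.span_induction with
      | mem x h =>
        obtain ⟨i, rfl⟩ := h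
        rw [hfc]
        by_cases him : (i : ℕ) + 1 < m
        · exact subset_span ⟨⟨(i : ℕ) + 1, him⟩, rfl⟩
        · rw [hze _ (le_of_not_gt him)]; exact zero_mem W
      | zero => rw [map_zero]; exact zero_mem W
      | add a b _ _ h1 h2 => rw [map_add]; exact add_mem h1 h2
      | smul a x _ h => rw [map_smul]; exact smul_mem _ a h
    set W' : Submodule k V :=
      ⨅ t ∈ (Finset.univ : Finset (Fin m)), LinearMap.ker (φ ∘ₗ (f ^ (t : ℕ))) with hW'def
    have hW'mem : ∀ x, x ∈ W' ↔ ∀ t : Fin m, φ ((f ^ (t : ℕ)) x) = 0 := by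
      intro x
      simp [hW'def, Submodule.mem_iInf, LinearMap.mem_ker]
    have hW'inv : ∀ x ∈ W', f x ∈ W' := by
      intro x hx
      rw [hW'mem] at hx ⊢
      intro t
      have key : φ ((f ^ ((t : ℕ) + 1)) x) = 0 := by
        by_cases htm : (t : ℕ) + 1 < m
        · exact hx ⟨(t : ℕ) + 1, htm⟩
        · have hfz : f ^ ((t : ℕ) + 1) = 0 := by
            rw [← Nat.sub_add_cancel (le_of_not_gt htm), pow_add, hfm, mul_zero]
          rw [hfz]; simp
      rw [show (f ^ (t : ℕ)) (f x) = (f ^ ((t : ℕ) + 1)) x by rw [pow_succ, Module.End.mul_apply]]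
      exact key
    have hdisj : W ⊓ W' = ⊥ := by
      rw [eq_bot_iff]
      intro x hx
      rw [Submodule.mem_inf] at hx
      obtain ⟨hxW, hxW'⟩ := hx
      obtain ⟨a, rfl⟩ := (mem_span_range_iff_exists_fun k).mp hxW
      have h0 : ∀ i, a i = 0 := hkey a ((hW'mem _).mp hxW')
      rw [Submodule.mem_bot]
      exact Finset.sum_eq_zero fun i _ => by rw [h0 i, zero_smul]
    have hWrank : finrank k ↥W = m := by
      rw [finrank_eq_card_basis (Basis.span hli)]
      simp
    have hW'rank : finrank k V ≤ finrank k ↥W' + m := by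
      simpa using jm_finrank_iInf_ker (fun t : Fin m => φ ∘ₗ (f ^ (t : ℕ))) Finset.univ
    have hsupfin := Submodule.finrank_sup_add_finrank_inf_eq W W'
    rw [hdisj, finrank_bot] at hsupfin
    have hle : finrank k ↥(W ⊔ W') ≤ finrank k V := Submodule.finrank_le _
    have htop : W ⊔ W' = ⊤ := Submodule.eq_top_of_finrank_eq (by omega)
    have hcompl : IsCompl W W' := ⟨disjoint_iff.mpr hdisj, codisjoint_iff.mpr htop⟩
    have hsum := Submodule.finrank_add_eq_of_isCompl hcompl
    have hW'small : finrank k ↥W' ≤ r := by omega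
    obtain ⟨ι', hι', b', d', hb'⟩ := ih ↥W' hW'small (f.restrict hW'inv) ⟨m, by
      rw [Module.End.pow_restrict]
      ext x
      simp [LinearMap.restrict_apply, hfm]⟩
    haveI := hι'
    set e := Submodule.prodEquivOfIsCompl W W' hcompl with hedef
    set bW : Basis (Fin m) k ↥W := Basis.span hli with hbWdef
    set b : Basis (Fin m ⊕ ι') k V := (bW.prod b').map e with hbdef
    set d : Fin m ⊕ ι' → ℤ :=
      Sum.elim (fun i : Fin m => 2 * ((i : ℕ) : ℤ) - ((m : ℤ) - 1)) d' with hddef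
    refine ⟨Fin m ⊕ ι', inferInstance, b, d, ?_⟩
    have hbinl : ∀ i : Fin m, b (Sum.inl i) = c i := by
      intro i
      rw [hbdef, Basis.map_apply]
      have h1 : bW.prod b' (Sum.inl i) = (bW i, 0) :=
        Prod.ext (by simp) (by simp)
      rw [h1, Submodule.coe_prodEquivOfIsCompl']
      show ↑((Basis.span hli) i) + ((0 : W') : V) = c i
      rw [Basis.span_apply]
      simp
    have hbinr : ∀ i' : ι', b (Sum.inr i') = ↑(b' i') := by
      intro i'
      rw [hbdef, Basis.map_apply]
      have h1 : bW.prod b' (Sum.inr i') = (0, b' i') :=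
        Prod.ext (by simp) (by simp)
      rw [h1, Submodule.coe_prodEquivOfIsCompl']
      simp
    have hrepr : ∀ (x : V) (l : Fin m ⊕ ι'), b.repr x l = (bW.prod b').repr (e.symm x) l := by
      intro x l
      rfl
    intro i j hij
    cases j with
    | inl jW =>
      rw [hbinl jW, hfc jW] at hij
      by_cases hj1 : (jW : ℕ) + 1 < m
      · have hcb : (f ^ ((jW : ℕ) + 1)) v = b (Sum.inl ⟨(jW : ℕ) + 1, hj1⟩) := by
          rw [hbinl]
        rw [hcb, Basis.repr_self] at hij
        have hieq : i = Sum.inl ⟨(jW : ℕ) + 1, hj1⟩ := by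
          by_contra hne
          exact hij (Finsupp.single_eq_of_ne' (Ne.symm hne))
        subst hieq
        simp only [hddef, Sum.elim_inl]
        push_cast
        ring
      · rw [hze _ (le_of_not_gt hj1), map_zero] at hij
        exact absurd (by simp) hij
    | inr jW' =>
      rw [hbinr jW'] at hij
      have hfx : f ↑(b' jW') = ↑(f.restrict hW'inv (b' jW')) :=
        (LinearMap.restrict_coe_apply _ _ _).symm
      rw [hfx, hrepr] at hij
      rw [show e.symm ↑((f.restrict hW'inv) (b' jW')) = (0, (f.restrict hW'inv) (b' jW')) from
        Submodule.prodEquivOfIsCompl_symm_apply_right W W' hcompl _] at hij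
      cases i with
      | inl iW =>
        rw [Basis.prod_repr_inl] at hij
        exact absurd (by simp) hij
      | inr iW' =>
        rw [Basis.prod_repr_inr] at hij
        have := hb' iW' jW' hij
        simpa [hddef] using this

/-- Jacobson–Morozov (semisimple part): for a nilpotent matrix `N` over a field
of characteristic zero, there is a diagonalizable matrix `H` with integer
eigenvalues such that `[H, N] = 2 N`. -/
theorem exists_semisimple_bracket_eq_two_smul {n : ℕ} {k : Type*} [Field k] [CharZero k]
    (N : Matrix (Fin n) (Fin n) k) (hN : IsNilpotent N) :
    ∃ H : Matrix (Fin n) (Fin n) k,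
      (∃ (g : GL (Fin n) k) (d : Fin n → ℤ),
        (g : Matrix (Fin n) (Fin n) k) * H * (↑(g⁻¹) : Matrix (Fin n) (Fin n) k)
          = Matrix.diagonal (fun i => (d i : k))) ∧
      H * N - N * H = (2 : k) • N := by
  classical
  set f : (Fin n → k) →ₗ[k] (Fin n → k) := Matrix.toLin' N with hfdef
  have hf : IsNilpotent f := by
    obtain ⟨s, hs⟩ := hN
    refine ⟨s, ?_⟩
    have h1 : (Matrix.toLinAlgEquiv' N) ^ s = Matrix.toLinAlgEquiv' (N ^ s) :=
      (map_pow (Matrix.toLinAlgEquiv' : Matrix (Fin n) (Fin n) k ≃ₐ[k] _) N s).symm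
    show (Matrix.toLinAlgEquiv' N) ^ s = 0
    rw [h1, hs, map_zero]
  obtain ⟨ι, hι, b0, d0, hd0⟩ := jm_key (finrank k (Fin n → k)) (Fin n → k) le_rfl f hf
  haveI := hι
  have hcard : Fintype.card ι = n := by
    have h1 := Module.finrank_eq_card_basis b0
    rw [Module.finrank_pi, Fintype.card_fin] at h1
    exact h1.symm
  set eq : ι ≃ Fin n := Fintype.equivFinOfCardEq hcard with heq
  set b2 := b0.reindex eq with hb2
  set d2 : Fin n → ℤ := d0 ∘ eq.symm with hd2def
  have hd2 : ∀ i j, b2.repr (f (b2 j)) i ≠ 0 → d2 i = d2 j + 2 := by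
    intro i j h
    rw [hb2, Basis.repr_reindex_apply, Basis.reindex_apply] at h
    exact hd0 _ _ h
  set M := LinearMap.toMatrix b2 b2 f with hMdef
  have hM : ∀ i j, M i j ≠ 0 → d2 i = d2 j + 2 := by
    intro i j h
    apply hd2
    rwa [hMdef, LinearMap.toMatrix_apply] at h
  set D : Matrix (Fin n) (Fin n) k := Matrix.diagonal (fun i => ((d2 i : ℤ) : k)) with hDdef
  have hDM : D * M - M * D = (2 : k) • M := by
    ext i j
    rw [Matrix.sub_apply, hDdef, Matrix.diagonal_mul, Matrix.mul_diagonal, Matrix.smul_apply,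
      smul_eq_mul]
    by_cases h : M i j = 0
    · rw [h]; ring
    · rw [hM i j h]; push_cast; ring
  set pb := Pi.basisFun k (Fin n) with hpb
  set P := pb.toMatrix b2 with hP
  set Q := b2.toMatrix pb with hQ
  have hPQ : P * Q = 1 := Basis.toMatrix_mul_toMatrix_flip pb b2
  have hQP : Q * P = 1 := Basis.toMatrix_mul_toMatrix_flip b2 pb
  have hNPMQ : N = P * M * Q := by
    have h := basis_toMatrix_mul_linearMap_toMatrix_mul_basis_toMatrix pb b2 pb b2 f
    rw [LinearMap.toMatrix_eq_toMatrix', hfdef, LinearMap.toMatrix'_toLin'] at h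
    exact h.symm
  refine ⟨P * D * Q, ⟨⟨Q, P, hQP, hPQ⟩, d2, ?_⟩, ?_⟩
  · show Q * (P * D * Q) * P = Matrix.diagonal _
    calc Q * (P * D * Q) * P = (Q * P) * D * (Q * P) := by noncomm_ring
    _ = D := by rw [hQP]; simp
  · have hmul : ∀ A B : Matrix (Fin n) (Fin n) k, (P * A * Q) * (P * B * Q) = P * (A * B) * Q := by
      intro A B
      calc (P * A * Q) * (P * B * Q) = P * A * (Q * P) * B * Q := by noncomm_ring
      _ = P * (A * B) * Q := by rw [hQP]; noncomm_ring
    rw [hNPMQ]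
    calc (P * D * Q) * (P * M * Q) - (P * M * Q) * (P * D * Q)
        = P * (D * M) * Q - P * (M * D) * Q := by rw [hmul, hmul]
    _ = P * (D * M - M * D) * Q := by rw [Matrix.mul_sub, Matrix.sub_mul]
    _ = P * ((2 : k) • M) * Q := by rw [hDM]
    _ = (2 : k) • (P * M * Q) := by rw [Matrix.mul_smul, Matrix.smul_mul]
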